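/- Let Σ be a generable set of d-dimensional nonsingular cones in ℤ^d and let B be a d×2 integer matrix which is not Σ-good. Then there exists a series of B-good blow-ups Σ̃ ⇝ Σ such that B is Σ̃-good. -/

import Mathlib

open Finset

/-- The cone in `ℝ^d` generated (over the nonnegative reals) by a finite set of
integer vectors. -/
def coneOf {d : ℕ} (S : Finset (Fin d → ℤ)) : Set (Fin d → ℝ) :=
  {x | ∃ c : (Fin d → ℤ) → ℝ, (∀ v, 0 ≤ c v) ∧ x = ∑ v ∈ S, c v • (fun l => (v l : ℝ))}

/-- `S` is the set of primitive edge generators of a `d`-dimensional nonsingular cone in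
`ℤ^d`, i.e. `S` consists of `d` vectors forming a `ℤ`-basis of `ℤ^d`.  We identify such a
cone with its finite set of edge generators, an edge with its unique primitive generator. -/
def IsNsCone (d : ℕ) (S : Finset (Fin d → ℤ)) : Prop :=
  S.card = d ∧ Submodule.span ℤ (S : Set (Fin d → ℤ)) = ⊤

/-- The set of edges `E(Σ)` of a finite set of cones, each cone being given by its finite
set of edge generators. -/
def edges {d : ℕ} (F : Finset (Finset (Fin d → ℤ))) : Finset (Fin d → ℤ) :=
  F.biUnion id

/-- A finite set of (`d`-dimensional nonsingular) cones is generable if the collection of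
all the faces of all its cones is a fan: the intersection of any two such faces is again a
face of both.  A face of a cone corresponds to a subset of its set of edge generators. -/
def IsGenerable {d : ℕ} (F : Finset (Finset (Fin d → ℤ))) : Prop :=
  ∀ σ ∈ F, ∀ σ' ∈ F, ∀ s ⊆ σ, ∀ s' ⊆ σ',
    (∃ t ⊆ σ, coneOf s ∩ coneOf s' = coneOf t) ∧
    (∃ t' ⊆ σ', coneOf s ∩ coneOf s' = coneOf t')

/-- The standard blow-up of `F` along the edges `ε₁, ε₂`: every cone `σ` containing both
`ε₁` and `ε₂` is replaced by the two cones `σ(ε₁)` and `σ(ε₂)` (where `σ(εᵢ)` is generated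
by `ε₁ + ε₂` together with the edges of `σ` other than `ε_j`, `{i,j} = {1,2}`), and all
other cones are kept. -/
def blowUp {d : ℕ} (F : Finset (Finset (Fin d → ℤ))) (ε₁ ε₂ : Fin d → ℤ) :
    Finset (Finset (Fin d → ℤ)) :=
  F.filter (fun σ => ¬(ε₁ ∈ σ ∧ ε₂ ∈ σ)) ∪
    (F.filter (fun σ => ε₁ ∈ σ ∧ ε₂ ∈ σ)).biUnion
      (fun σ => {insert (ε₁ + ε₂) (σ.erase ε₂), insert (ε₁ + ε₂) (σ.erase ε₁)})

/-- For a `d × n` integer matrix `B` and an edge with primitive generator `ε`,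
`bEdge B ε i = Σ_j ε_j b_{j i}`. -/
def bEdge {d n : ℕ} (B : Matrix (Fin d) (Fin n) ℤ) (ε : Fin d → ℤ) (i : Fin n) : ℤ :=
  ∑ j, ε j * B j i

/-- `B` is `σ`-good: there is a permutation `γ` of the column indices such that
`b_{ε γ(1)} ≤ ⋯ ≤ b_{ε γ(n)}` for every edge `ε` of `σ`. -/
def GoodCone {d n : ℕ} (B : Matrix (Fin d) (Fin n) ℤ) (σ : Finset (Fin d → ℤ)) : Prop :=
  ∃ γ : Equiv.Perm (Fin n), ∀ ε ∈ σ, Monotone fun i => bEdge B ε (γ i)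

/-- `B` is `Σ`-good: it is `σ`-good for every `σ ∈ Σ`. -/
def GoodFan {d n : ℕ} (B : Matrix (Fin d) (Fin n) ℤ) (F : Finset (Finset (Fin d → ℤ))) :
    Prop :=
  ∀ σ ∈ F, GoodCone B σ

open scoped Classical

/-- For a `d × 2` matrix `B`, `deltaB B ε = b_{ε 1} - b_{ε 2}`. -/
def deltaB {d : ℕ} (B : Matrix (Fin d) (Fin 2) ℤ) (ε : Fin d → ℤ) : ℤ :=
  bEdge B ε 0 - bEdge B ε 1

/-- `Σ_bad(B)`: the cones of `Σ` for which `B` is not good. -/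
noncomputable def badCones {d : ℕ} (B : Matrix (Fin d) (Fin 2) ℤ)
    (F : Finset (Finset (Fin d → ℤ))) : Finset (Finset (Fin d → ℤ)) :=
  F.filter (fun σ => ¬ GoodCone B σ)

/-- `μ_B(Σ) = max { |b_{ε1} - b_{ε2}| : ε ∈ E(Σ_bad(B)) }`, and `0` if `Σ_bad(B) = ∅`. -/
noncomputable def muB {d : ℕ} (B : Matrix (Fin d) (Fin 2) ℤ)
    (F : Finset (Finset (Fin d → ℤ))) : ℕ :=
  (edges (badCones B F)).sup fun ε => (deltaB B ε).natAbs

/-- `E_B(Σ)`: the edges of `Σ_bad(B)` realizing the maximum `μ_B(Σ)`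
(empty if `Σ_bad(B) = ∅`). -/
noncomputable def EB {d : ℕ} (B : Matrix (Fin d) (Fin 2) ℤ)
    (F : Finset (Finset (Fin d → ℤ))) : Finset (Fin d → ℤ) :=
  (edges (badCones B F)).filter fun ε => (deltaB B ε).natAbs = muB B F

/-- `E_B(Σ, ε) = {ε' ∈ E(Σ_bad(B)) ∩ E(Σ(ε)) : (b_{ε1} - b_{ε2})(b_{ε'1} - b_{ε'2}) < 0}`. -/
noncomputable def EBe {d : ℕ} (B : Matrix (Fin d) (Fin 2) ℤ)
    (F : Finset (Finset (Fin d → ℤ))) (ε : Fin d → ℤ) : Finset (Fin d → ℤ) :=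
  ((edges (badCones B F)) ∩ edges (F.filter fun σ => ε ∈ σ)).filter
    fun ε' => deltaB B ε * deltaB B ε' < 0

/-- `ν_B(Σ) = Σ_{ε ∈ E_B(Σ)} #E_B(Σ, ε)`. -/
noncomputable def nuB {d : ℕ} (B : Matrix (Fin d) (Fin 2) ℤ)
    (F : Finset (Finset (Fin d → ℤ))) : ℕ :=
  ∑ ε ∈ EB B F, (EBe B F ε).card

/-- `F'` is a `B`-good standard blow-up of `F`: it is the standard blow-up of `F` along
some `ε₁ ∈ E_B(F)` and `ε₂ ∈ E_B(F, ε₁)` with `|b_{ε₂1} - b_{ε₂2}|` maximal among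
`E_B(F, ε₁)`. -/
noncomputable def IsBGoodBlowUp {d : ℕ} (B : Matrix (Fin d) (Fin 2) ℤ)
    (F F' : Finset (Finset (Fin d → ℤ))) : Prop :=
  ∃ ε₁ ε₂ : Fin d → ℤ,
    ε₁ ≠ ε₂ ∧ ε₁ ∈ edges F ∧ ε₂ ∈ edges F ∧ (∃ σ ∈ F, ε₁ ∈ σ ∧ ε₂ ∈ σ) ∧
    ε₁ ∈ EB B F ∧ ε₂ ∈ EBe B F ε₁ ∧
    (deltaB B ε₂).natAbs = (EBe B F ε₁).sup (fun ε => (deltaB B ε).natAbs) ∧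
    F' = blowUp F ε₁ ε₂

/-!
For a `d × 2` matrix, a cone is `B`-good exactly when `δ ε = b_{ε1} - b_{ε2}` does not change
sign on its edges. A `B`-good blow-up along `ε₁, ε₂` (opposite signs, `|δ ε₂| ≤ |δ ε₁| = μ_B`)
creates an edge `ε₁ + ε₂` with `|δ| < μ_B` and leaves no cone containing both `ε₁` and `ε₂`.
Hence `μ_B` does not grow, and when it stays the same, `E_B` and every `E_B(-, ε)` can only
shrink while `ε₂` leaves `E_B(-, ε₁)`, so `ν_B` drops. Blowing up while some cone is bad thus
terminates by lexicographic descent on `(μ_B, ν_B)`.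

The geometric input is that the cones keep forming a simplicial fan through every blow-up
(for the initial fan this uses that generators of nonsingular cones are primitive), so a cone
containing `ε₁ + ε₂` must be one of the new cones; this is what keeps the exceptional edge
out of the sets `E_B(Σ̃, ε)`.
-/

theorem LinearIndepOn.ite_eq_ite_of_sum_eq {ι R M : Type*} [Ring R] [AddCommGroup M]
    [Module R M] {v : ι → M} {σ s t : Finset ι} (hσ : LinearIndepOn R v (σ : Set ι))
    (hs : s ⊆ σ) (ht : t ⊆ σ) {f g : ι → R}
    (h : ∑ i ∈ s, f i • v i = ∑ i ∈ t, g i • v i) {i : ι} (hi : i ∈ σ) :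
    (if i ∈ s then f i else 0) = if i ∈ t then g i else 0 := by
  refine sub_eq_zero.1 (linearIndepOn_finset_iff.1 hσ
    (fun i => (if i ∈ s then f i else 0) - if i ∈ t then g i else 0) ?_ i hi)
  simp only [sub_smul, ite_smul, zero_smul, Finset.sum_sub_distrib, Finset.sum_ite_mem,
    Finset.inter_eq_right.2 hs, Finset.inter_eq_right.2 ht, h, sub_self]

section SimplicialCones

variable {d : ℕ}

def realVec : (Fin d → ℤ) →ₗ[ℤ] (Fin d → ℝ) :=
  (Int.castAddHom ℝ).toIntLinearMap.compLeft (Fin d)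

@[simp]
lemma realVec_apply (v : Fin d → ℤ) (l : Fin d) : realVec v l = v l := rfl

lemma realVec_injective : Function.Injective (realVec (d := d)) := fun _ _ h =>
  funext fun l => by simpa using congrFun h l

lemma mem_coneOf {S : Finset (Fin d → ℤ)} {x : Fin d → ℝ} :
    x ∈ coneOf S ↔ ∃ c : (Fin d → ℤ) → ℝ, (∀ v, 0 ≤ c v) ∧ x = ∑ v ∈ S, c v • realVec v :=
  Iff.rfl

lemma mem_coneOf_of_eq_sum {s t : Finset (Fin d → ℤ)} (hts : t ⊆ s) {f : (Fin d → ℤ) → ℝ}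
    (hf : ∀ v, 0 ≤ f v) {x : Fin d → ℝ} (hx : x = ∑ v ∈ s, f v • realVec v)
    (hvanish : ∀ v ∈ s, v ∉ t → f v = 0) : x ∈ coneOf t :=
  ⟨f, hf, by
    rw [hx, Finset.sum_subset hts fun v hv hvt => by rw [hvanish v hv hvt, zero_smul]]
    rfl⟩

lemma coneOf_mono {S T : Finset (Fin d → ℤ)} (h : S ⊆ T) : coneOf S ⊆ coneOf T := by
  rintro x ⟨c, hc, rfl⟩
  refine ⟨fun v => if v ∈ S then c v else 0, fun v => by by_cases hv : v ∈ S <;> simp [hv, hc], ?_⟩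
  simp only [ite_smul, zero_smul, Finset.sum_ite_mem, Finset.inter_eq_right.2 h]

lemma realVec_mem_coneOf {S : Finset (Fin d → ℤ)} {v : Fin d → ℤ} (hv : v ∈ S) :
    realVec v ∈ coneOf S :=
  ⟨fun w => if w = v then 1 else 0, fun w => by by_cases hw : w = v <;> simp [hw],
    by simp [ite_smul, hv]; rfl⟩

lemma LinearIndepOn.add_notMem {σ : Finset (Fin d → ℤ)}
    (hσ : LinearIndepOn ℝ realVec (σ : Set (Fin d → ℤ))) {a b : Fin d → ℤ} (ha : a ∈ σ)
    (hb : b ∈ σ) (hab : a ≠ b) : a + b ∉ σ := by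
  intro he
  have hba : a + b ≠ a := fun h => hσ.ne_zero hb (by simp [add_eq_left.1 h])
  have hab' : a + b ≠ b := fun h => hσ.ne_zero ha (by simp [add_eq_right.1 h])
  have hsum : ∑ i ∈ {a, b}, (1 : ℝ) • realVec i = ∑ i ∈ {a + b}, (1 : ℝ) • realVec i := by
    simp [Finset.sum_pair hab]
  simpa [hba, hab'] using hσ.ite_eq_ite_of_sum_eq (by simp [Finset.insert_subset_iff, ha, hb])
    (by simpa using he) hsum he

end SimplicialCones

section BlowUpCone

variable {d : ℕ} {a b : Fin d → ℤ} {σ : Finset (Fin d → ℤ)}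

/-- The cone `σ(a)` of the blow-up of `σ` along `a, b`: the edge `b` is replaced by `a + b`. -/
def blowUpCone (a b : Fin d → ℤ) (σ : Finset (Fin d → ℤ)) : Finset (Fin d → ℤ) :=
  insert (a + b) (σ.erase b)

lemma mem_blowUpCone {v : Fin d → ℤ} : v ∈ blowUpCone a b σ ↔ v = a + b ∨ v ≠ b ∧ v ∈ σ := by
  simp [blowUpCone]

/-- The coefficients on `σ` of a combination `∑ v ∈ blowUpCone a b σ, f v • v`. -/
def pullCoeff (a b : Fin d → ℤ) (f : (Fin d → ℤ) → ℝ) : (Fin d → ℤ) → ℝ :=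
  fun v => if v = a then f a + f (a + b) else if v = b then f (a + b) else f v

variable {f : (Fin d → ℤ) → ℝ}

lemma pullCoeff_left : pullCoeff a b f a = f a + f (a + b) := by simp [pullCoeff]

lemma pullCoeff_right (hab : a ≠ b) : pullCoeff a b f b = f (a + b) := by
  simp [pullCoeff, hab.symm]

lemma pullCoeff_of_ne {v : Fin d → ℤ} (hva : v ≠ a) (hvb : v ≠ b) : pullCoeff a b f v = f v := by
  simp [pullCoeff, hva, hvb]

lemma pullCoeff_nonneg (hf : ∀ v, 0 ≤ f v) (v : Fin d → ℤ) : 0 ≤ pullCoeff a b f v := by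
  unfold pullCoeff
  split_ifs
  exacts [add_nonneg (hf _) (hf _), hf _, hf _]

lemma eq_zero_of_pullCoeff_eq_zero (hf : ∀ v, 0 ≤ f v) {v : Fin d → ℤ} (hvb : v ≠ b)
    (h : pullCoeff a b f v = 0) : f v = 0 := by
  by_cases hva : v = a
  · subst hva
    rw [pullCoeff_left] at h
    linarith [hf v, hf (v + b)]
  · rwa [pullCoeff_of_ne hva hvb] at h

lemma sum_blowUpCone (ha : a ∈ σ) (hb : b ∈ σ) (hab : a ≠ b) (he : a + b ∉ σ)
    (f : (Fin d → ℤ) → ℝ) :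
    ∑ v ∈ blowUpCone a b σ, f v • realVec v = ∑ v ∈ σ, pullCoeff a b f v • realVec v := by
  have ha' : a ∈ σ.erase b := Finset.mem_erase.2 ⟨hab, ha⟩
  have hrest : ∑ v ∈ (σ.erase b).erase a, pullCoeff a b f v • realVec v
      = ∑ v ∈ (σ.erase b).erase a, f v • realVec v :=
    Finset.sum_congr rfl fun v hv => by
      rw [pullCoeff_of_ne (Finset.ne_of_mem_erase hv)
        (Finset.ne_of_mem_erase (Finset.mem_of_mem_erase hv))]
  rw [blowUpCone, Finset.sum_insert (fun h => he (Finset.mem_of_mem_erase h)),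
    ← Finset.add_sum_erase σ _ hb, ← Finset.add_sum_erase _ _ ha',
    ← Finset.add_sum_erase _ _ ha', hrest, pullCoeff_left, pullCoeff_right hab, map_add]
  module

lemma LinearIndepOn.blowUpCone (hσ : LinearIndepOn ℝ realVec (σ : Set (Fin d → ℤ)))
    (ha : a ∈ σ) (hb : b ∈ σ) (hab : a ≠ b) :
    LinearIndepOn ℝ realVec (blowUpCone a b σ : Set (Fin d → ℤ)) := by
  refine linearIndepOn_finset_iff.2 fun f h0 v hv => ?_
  rw [sum_blowUpCone ha hb hab (hσ.add_notMem ha hb hab)] at h0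
  have hcoeff := linearIndepOn_finset_iff.1 hσ _ h0
  have he : f (a + b) = 0 := by simpa [pullCoeff_right hab] using hcoeff b hb
  rcases mem_blowUpCone.1 hv with rfl | ⟨hvb, hvσ⟩
  · exact he
  by_cases hva : v = a
  · subst hva
    simpa [pullCoeff_left, he] using hcoeff v hvσ
  · simpa [pullCoeff_of_ne hva hvb] using hcoeff v hvσ

lemma coneOf_blowUpCone_subset (hσ : LinearIndepOn ℝ realVec (σ : Set (Fin d → ℤ)))
    (ha : a ∈ σ) (hb : b ∈ σ) (hab : a ≠ b) : coneOf (blowUpCone a b σ) ⊆ coneOf σ := by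
  rintro x ⟨f, hf, rfl⟩
  exact ⟨pullCoeff a b f, pullCoeff_nonneg hf,
    sum_blowUpCone ha hb hab (hσ.add_notMem ha hb hab) f⟩

lemma pullCoeff_eq_ite {τ : Finset (Fin d → ℤ)}
    (hσ : LinearIndepOn ℝ realVec (σ : Set (Fin d → ℤ))) (ha : a ∈ σ) (hb : b ∈ σ) (hab : a ≠ b)
    {g : (Fin d → ℤ) → ℝ}
    (h : ∑ v ∈ blowUpCone a b σ, f v • realVec v = ∑ v ∈ σ ∩ τ, g v • realVec v)
    {v : Fin d → ℤ} (hv : v ∈ σ) : pullCoeff a b f v = if v ∈ τ then g v else 0 := by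
  rw [sum_blowUpCone ha hb hab (hσ.add_notMem ha hb hab)] at h
  simpa [hv] using hσ.ite_eq_ite_of_sum_eq subset_rfl Finset.inter_subset_left h hv

end BlowUpCone

section SimplicialFan

variable {d : ℕ} {a b : Fin d → ℤ} {σ σ' τ : Finset (Fin d → ℤ)}

/-- The part of generability that survives blow-ups: simplicial cones meeting in common faces. -/
structure IsSimplicialFan (F : Finset (Finset (Fin d → ℤ))) : Prop where
  linearIndepOn : ∀ σ ∈ F, LinearIndepOn ℝ realVec (σ : Set (Fin d → ℤ))
  inter_subset : ∀ σ ∈ F, ∀ τ ∈ F, coneOf σ ∩ coneOf τ ⊆ coneOf (σ ∩ τ)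

lemma coneOf_blowUpCone_inter_subset (hσ : LinearIndepOn ℝ realVec (σ : Set (Fin d → ℤ)))
    (hστ : coneOf σ ∩ coneOf τ ⊆ coneOf (σ ∩ τ)) (ha : a ∈ σ) (hb : b ∈ σ) (hab : a ≠ b)
    (hτ : a ∉ τ ∨ b ∉ τ) :
    coneOf (blowUpCone a b σ) ∩ coneOf τ ⊆ coneOf (blowUpCone a b σ ∩ τ) := by
  rintro x ⟨⟨f, hf, rfl⟩, hxτ⟩
  obtain ⟨g, -, hg⟩ := hστ ⟨coneOf_blowUpCone_subset hσ ha hb hab ⟨f, hf, rfl⟩, hxτ⟩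
  have hcoeff := fun {v} => pullCoeff_eq_ite hσ ha hb hab hg (v := v)
  have he : f (a + b) = 0 := by
    rcases hτ with haτ | hbτ
    · have := hcoeff ha
      rw [if_neg haτ, pullCoeff_left] at this
      linarith [hf a, hf (a + b)]
    · simpa [hbτ, pullCoeff_right hab] using hcoeff hb
  refine mem_coneOf_of_eq_sum Finset.inter_subset_left hf rfl fun v hv hvτ => ?_
  rcases mem_blowUpCone.1 hv with rfl | ⟨hvb, hvσ⟩
  · exact he
  have hvτ' : v ∉ τ := fun h => hvτ (Finset.mem_inter.2 ⟨hv, h⟩)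
  exact eq_zero_of_pullCoeff_eq_zero hf hvb (by rw [hcoeff hvσ, if_neg hvτ'])

lemma coneOf_blowUpCone_inter_blowUpCone_subset
    (hσ : LinearIndepOn ℝ realVec (σ : Set (Fin d → ℤ)))
    (hσ' : LinearIndepOn ℝ realVec (σ' : Set (Fin d → ℤ)))
    (hσσ' : coneOf σ ∩ coneOf σ' ⊆ coneOf (σ ∩ σ')) (ha : a ∈ σ) (hb : b ∈ σ) (ha' : a ∈ σ')
    (hb' : b ∈ σ') (hab : a ≠ b) :
    coneOf (blowUpCone a b σ) ∩ coneOf (blowUpCone a b σ') ⊆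
      coneOf (blowUpCone a b σ ∩ blowUpCone a b σ') := by
  rintro x ⟨⟨f, hf, rfl⟩, hx'⟩
  obtain ⟨g, -, hg⟩ := hσσ' ⟨coneOf_blowUpCone_subset hσ ha hb hab ⟨f, hf, rfl⟩,
    coneOf_blowUpCone_subset hσ' ha' hb' hab hx'⟩
  refine mem_coneOf_of_eq_sum Finset.inter_subset_left hf rfl fun v hv hvN' => ?_
  rcases mem_blowUpCone.1 hv with rfl | ⟨hvb, hvσ⟩
  · exact absurd (Finset.mem_inter.2 ⟨hv, mem_blowUpCone.2 (Or.inl rfl)⟩) hvN'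
  have hvσ' : v ∉ σ' := fun h =>
    hvN' (Finset.mem_inter.2 ⟨hv, mem_blowUpCone.2 (Or.inr ⟨hvb, h⟩)⟩)
  exact eq_zero_of_pullCoeff_eq_zero hf hvb
    (by rw [pullCoeff_eq_ite hσ ha hb hab hg hvσ, if_neg hvσ'])

lemma coneOf_blowUpCone_inter_blowUpCone_swap_subset
    (hσ : LinearIndepOn ℝ realVec (σ : Set (Fin d → ℤ)))
    (hσ' : LinearIndepOn ℝ realVec (σ' : Set (Fin d → ℤ)))
    (hσσ' : coneOf σ ∩ coneOf σ' ⊆ coneOf (σ ∩ σ')) (ha : a ∈ σ) (hb : b ∈ σ) (ha' : a ∈ σ')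
    (hb' : b ∈ σ') (hab : a ≠ b) :
    coneOf (blowUpCone a b σ) ∩ coneOf (blowUpCone b a σ') ⊆
      coneOf (blowUpCone a b σ ∩ blowUpCone b a σ') := by
  rintro x ⟨⟨f, hf, rfl⟩, ⟨f', hf', hx'⟩⟩
  obtain ⟨g, -, hg⟩ := hσσ' ⟨coneOf_blowUpCone_subset hσ ha hb hab ⟨f, hf, rfl⟩,
    coneOf_blowUpCone_subset hσ' hb' ha' hab.symm ⟨f', hf', hx'⟩⟩
  have hcoeff := fun {v} => pullCoeff_eq_ite hσ ha hb hab hg (v := v)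
  have hcoeff' := fun {v} => pullCoeff_eq_ite (f := f') (g := g) hσ' hb' ha' hab.symm
    (by rw [Finset.inter_comm]; exact hx'.symm.trans hg) (v := v)
  -- the coordinates `c` of the point, which agree on `σ` and `σ'`, have `c a ≥ c b` on `σ` and
  -- `c b ≥ c a` on `σ'`
  have hfa : f a = 0 := by
    have h1 := hcoeff ha
    have h2 := hcoeff hb
    have h3 := hcoeff' ha'
    have h4 := hcoeff' hb'
    simp only [pullCoeff_left, pullCoeff_right hab, pullCoeff_right hab.symm, ha, hb, ha', hb',
      if_true, add_comm b a] at h1 h2 h3 h4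
    linarith [hf a, hf' b]
  refine mem_coneOf_of_eq_sum Finset.inter_subset_left hf rfl fun v hv hvN' => ?_
  rcases mem_blowUpCone.1 hv with rfl | ⟨hvb, hvσ⟩
  · exact absurd (Finset.mem_inter.2 ⟨hv, mem_blowUpCone.2 (Or.inl (add_comm a b))⟩) hvN'
  by_cases hva : v = a
  · rwa [hva]
  have hvσ' : v ∉ σ' := fun h =>
    hvN' (Finset.mem_inter.2 ⟨hv, mem_blowUpCone.2 (Or.inr ⟨hva, h⟩)⟩)
  exact eq_zero_of_pullCoeff_eq_zero hf hvb (by rw [hcoeff hvσ, if_neg hvσ'])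

end SimplicialFan

section BlowUp

variable {d : ℕ} {F : Finset (Finset (Fin d → ℤ))} {ε₁ ε₂ : Fin d → ℤ} {τ : Finset (Fin d → ℤ)}

lemma mem_blowUp_iff :
    τ ∈ blowUp F ε₁ ε₂ ↔ (τ ∈ F ∧ ¬(ε₁ ∈ τ ∧ ε₂ ∈ τ)) ∨
      ∃ σ ∈ F, ε₁ ∈ σ ∧ ε₂ ∈ σ ∧ (τ = blowUpCone ε₁ ε₂ σ ∨ τ = blowUpCone ε₂ ε₁ σ) := by
  simp only [blowUp, blowUpCone, add_comm ε₂ ε₁, Finset.mem_union, Finset.mem_filter,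
    Finset.mem_biUnion, Finset.mem_insert, Finset.mem_singleton, and_assoc]

lemma IsSimplicialFan.blowUpCone_inter_subset (hF : IsSimplicialFan F)
    {σ τ N : Finset (Fin d → ℤ)} (hσ : σ ∈ F) (h₁ : ε₁ ∈ σ) (h₂ : ε₂ ∈ σ) (hne : ε₁ ≠ ε₂)
    (hN : N = blowUpCone ε₁ ε₂ σ ∨ N = blowUpCone ε₂ ε₁ σ) (hτ : τ ∈ F)
    (hτ₁₂ : ¬(ε₁ ∈ τ ∧ ε₂ ∈ τ)) : coneOf N ∩ coneOf τ ⊆ coneOf (N ∩ τ) := by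
  have hστ := hF.inter_subset σ hσ τ hτ
  rcases hN with rfl | rfl
  · exact coneOf_blowUpCone_inter_subset (hF.linearIndepOn σ hσ) hστ h₁ h₂ hne (by tauto)
  · exact coneOf_blowUpCone_inter_subset (hF.linearIndepOn σ hσ) hστ h₂ h₁ hne.symm (by tauto)

lemma IsSimplicialFan.blowUpCone_inter_blowUpCone_subset (hF : IsSimplicialFan F)
    {σ σ' N N' : Finset (Fin d → ℤ)} (hσ : σ ∈ F) (h₁ : ε₁ ∈ σ) (h₂ : ε₂ ∈ σ)
    (hσ' : σ' ∈ F) (h₁' : ε₁ ∈ σ') (h₂' : ε₂ ∈ σ') (hne : ε₁ ≠ ε₂)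
    (hN : N = blowUpCone ε₁ ε₂ σ ∨ N = blowUpCone ε₂ ε₁ σ)
    (hN' : N' = blowUpCone ε₁ ε₂ σ' ∨ N' = blowUpCone ε₂ ε₁ σ') :
    coneOf N ∩ coneOf N' ⊆ coneOf (N ∩ N') := by
  have hI := hF.linearIndepOn σ hσ
  have hI' := hF.linearIndepOn σ' hσ'
  have hσσ' := hF.inter_subset σ hσ σ' hσ'
  rcases hN with rfl | rfl <;> rcases hN' with rfl | rfl
  · exact coneOf_blowUpCone_inter_blowUpCone_subset hI hI' hσσ' h₁ h₂ h₁' h₂' hne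
  · exact coneOf_blowUpCone_inter_blowUpCone_swap_subset hI hI' hσσ' h₁ h₂ h₁' h₂' hne
  · rw [Set.inter_comm, Finset.inter_comm]
    exact coneOf_blowUpCone_inter_blowUpCone_swap_subset hI' hI
      (by rw [Set.inter_comm, Finset.inter_comm]; exact hσσ') h₁' h₂' h₁ h₂ hne
  · exact coneOf_blowUpCone_inter_blowUpCone_subset hI hI' hσσ' h₂ h₁ h₂' h₁' hne.symm

theorem IsSimplicialFan.blowUp (hF : IsSimplicialFan F) (hne : ε₁ ≠ ε₂) :
    IsSimplicialFan (blowUp F ε₁ ε₂) where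
  linearIndepOn τ hτ := by
    rcases mem_blowUp_iff.1 hτ with ⟨hτF, -⟩ | ⟨σ, hσ, h₁, h₂, rfl | rfl⟩
    · exact hF.linearIndepOn τ hτF
    · exact (hF.linearIndepOn σ hσ).blowUpCone h₁ h₂ hne
    · exact (hF.linearIndepOn σ hσ).blowUpCone h₂ h₁ hne.symm
  inter_subset σ' hσ' τ' hτ' := by
    rcases mem_blowUp_iff.1 hσ' with ⟨hσF, hσk⟩ | ⟨σ, hσ, hσ₁, hσ₂, hσN⟩ <;>
      rcases mem_blowUp_iff.1 hτ' with ⟨hτF, hτk⟩ | ⟨τ, hτ, hτ₁, hτ₂, hτN⟩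
    · exact hF.inter_subset σ' hσF τ' hτF
    · rw [Set.inter_comm, Finset.inter_comm]
      exact hF.blowUpCone_inter_subset hτ hτ₁ hτ₂ hne hτN hσF hσk
    · exact hF.blowUpCone_inter_subset hσ hσ₁ hσ₂ hne hσN hτF hτk
    · exact hF.blowUpCone_inter_blowUpCone_subset hσ hσ₁ hσ₂ hτ hτ₁ hτ₂ hne hσN hτN

theorem IsSimplicialFan.mem_of_add_mem (hF : IsSimplicialFan F) {σ τ : Finset (Fin d → ℤ)}
    (hσ : σ ∈ F) (hτ : τ ∈ F) {a b : Fin d → ℤ} (ha : a ∈ σ) (hb : b ∈ σ) (hab : a ≠ b)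
    (he : a + b ∈ τ) : a ∈ τ ∧ b ∈ τ := by
  have hpair : ({a, b} : Finset (Fin d → ℤ)) ⊆ σ := by simp [Finset.insert_subset_iff, ha, hb]
  have hsum : ∑ v ∈ {a, b}, (1 : ℝ) • realVec v = realVec (a + b) := by
    simp [Finset.sum_pair hab]
  have hmem : realVec (a + b) ∈ coneOf σ ∩ coneOf τ :=
    ⟨coneOf_mono hpair ⟨fun _ => 1, fun _ => zero_le_one, hsum.symm⟩, realVec_mem_coneOf he⟩
  obtain ⟨g, -, hg⟩ := mem_coneOf.1 (hF.inter_subset σ hσ τ hτ hmem)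
  have hcoeff := fun {v} => (hF.linearIndepOn σ hσ).ite_eq_ite_of_sum_eq hpair
    Finset.inter_subset_left (hsum.trans hg) (i := v)
  constructor <;> by_contra hnot
  · simpa [hnot] using hcoeff ha
  · simpa [hnot] using hcoeff hb

lemma blowUpCone_subset_insert (a b : Fin d → ℤ) (σ : Finset (Fin d → ℤ)) :
    blowUpCone a b σ ⊆ insert (a + b) σ :=
  Finset.insert_subset_insert _ (Finset.erase_subset _ _)

lemma mem_or_subset_insert_of_mem_blowUp (h : τ ∈ blowUp F ε₁ ε₂) :
    (τ ∈ F ∧ ¬(ε₁ ∈ τ ∧ ε₂ ∈ τ)) ∨ ∃ σ ∈ F, ε₁ ∈ σ ∧ ε₂ ∈ σ ∧ τ ⊆ insert (ε₁ + ε₂) σ := by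
  rcases mem_blowUp_iff.1 h with hold | ⟨σ, hσ, h₁, h₂, rfl | rfl⟩
  · exact Or.inl hold
  · exact Or.inr ⟨σ, hσ, h₁, h₂, blowUpCone_subset_insert _ _ _⟩
  · exact Or.inr ⟨σ, hσ, h₁, h₂, add_comm ε₂ ε₁ ▸ blowUpCone_subset_insert _ _ _⟩

lemma not_mem_and_mem_of_mem_blowUp (h₁ : ε₁ ≠ 0) (h₂ : ε₂ ≠ 0) (h : τ ∈ blowUp F ε₁ ε₂) :
    ¬(ε₁ ∈ τ ∧ ε₂ ∈ τ) := by
  rcases mem_blowUp_iff.1 h with ⟨-, hold⟩ | ⟨σ, -, -, -, rfl | rfl⟩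
  · exact hold
  · simp [mem_blowUpCone, h₁]
  · simp [mem_blowUpCone, h₂, add_comm ε₂ ε₁]

lemma exists_subset_insert_of_add_mem_blowUp (hF : IsSimplicialFan F)
    {σ₀ : Finset (Fin d → ℤ)} (hσ₀ : σ₀ ∈ F) (h₁ : ε₁ ∈ σ₀) (h₂ : ε₂ ∈ σ₀) (hne : ε₁ ≠ ε₂)
    (hτ : τ ∈ blowUp F ε₁ ε₂) (he : ε₁ + ε₂ ∈ τ) :
    ∃ σ ∈ F, ε₁ ∈ σ ∧ ε₂ ∈ σ ∧ τ ⊆ insert (ε₁ + ε₂) σ :=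
  (mem_or_subset_insert_of_mem_blowUp hτ).resolve_left fun ⟨hτF, hnot⟩ =>
    hnot (hF.mem_of_add_mem hσ₀ hτF h₁ h₂ hne he)

end BlowUp

section Nonsingular

variable {d : ℕ} {σ τ : Finset (Fin d → ℤ)}

lemma realVec_mem_span_of_mem_span {z : Fin d → ℤ}
    (hz : z ∈ Submodule.span ℤ (σ : Set (Fin d → ℤ))) :
    realVec z ∈ Submodule.span ℝ (realVec '' (σ : Set (Fin d → ℤ))) := by
  induction hz using Submodule.span_induction with
  | mem v hv => exact Submodule.subset_span ⟨v, hv, rfl⟩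
  | zero => simp
  | add x y _ _ hx hy => rw [map_add]; exact add_mem hx hy
  | smul k x _ hx => rw [map_zsmul]; exact zsmul_mem hx k

theorem IsNsCone.linearIndepOn (h : IsNsCone d σ) :
    LinearIndepOn ℝ realVec (σ : Set (Fin d → ℤ)) := by
  have hspan : ⊤ ≤ Submodule.span ℝ (Set.range fun v : (σ : Set (Fin d → ℤ)) => realVec v.1) := by
    rw [← (Pi.basisFun ℝ (Fin d)).span_eq, Submodule.span_le, ← Set.image_eq_range]
    rintro _ ⟨l, rfl⟩
    have hsingle : Pi.basisFun ℝ (Fin d) l = realVec (Pi.single l 1) := by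
      ext j
      by_cases hj : j = l <;> simp [hj]
    rw [hsingle]
    exact realVec_mem_span_of_mem_span (h.2 ▸ Submodule.mem_top)
  exact linearIndependent_of_top_le_span_of_card_eq_finrank hspan (by simp [h.1])

lemma IsNsCone.exists_intCast_eq (h : IsNsCone d σ) {v w : Fin d → ℤ} (hv : v ∈ σ) {α : ℝ}
    (hw : realVec w = α • realVec v) : ∃ k : ℤ, (k : ℝ) = α := by
  obtain ⟨g, -, hg⟩ := Submodule.mem_span_finset.1
    (h.2 ▸ Submodule.mem_top : w ∈ Submodule.span ℤ (σ : Set (Fin d → ℤ)))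
  have hsum : ∑ u ∈ σ, (g u : ℝ) • realVec u = ∑ u ∈ {v}, α • realVec u := by
    rw [Finset.sum_singleton, ← hw, ← hg, map_sum]
    exact Finset.sum_congr rfl fun u _ => by rw [map_zsmul, Int.cast_smul_eq_zsmul]
  have hcoeff := h.linearIndepOn.ite_eq_ite_of_sum_eq subset_rfl
    (Finset.singleton_subset_iff.2 hv) hsum hv
  exact ⟨g v, by simpa [hv] using hcoeff⟩

lemma IsNsCone.eq_of_realVec_eq_smul (hσ : IsNsCone d σ) (hτ : IsNsCone d τ)
    {v w : Fin d → ℤ} (hv : v ∈ σ) (hw : w ∈ τ) {α : ℝ} (hα : 0 < α)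
    (h : realVec w = α • realVec v) : w = v := by
  obtain ⟨k, hk⟩ := hσ.exists_intCast_eq hv h
  obtain ⟨m, hm⟩ := hτ.exists_intCast_eq hw (w := v) (α := α⁻¹)
    (by rw [h, smul_smul, inv_mul_cancel₀ hα.ne', one_smul])
  have hkm : k * m = 1 := by
    exact_mod_cast (by rw [hk, hm, mul_inv_cancel₀ hα.ne'] : (k * m : ℝ) = 1)
  have hk1 : k = 1 := Int.eq_one_of_mul_eq_one_right (by exact_mod_cast hk ▸ hα.le) hkm
  apply realVec_injective
  rw [h, ← hk, hk1, Int.cast_one, one_smul]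

lemma exists_mem_eq_pos_smul_of_coneOf_subset {t t' : Finset (Fin d → ℤ)}
    (ht : LinearIndepOn ℝ realVec (t : Set (Fin d → ℤ))) {v : Fin d → ℤ} (hv : v ∈ t)
    (hsub : coneOf t' ⊆ coneOf t) (hvt' : realVec v ∈ coneOf t') :
    ∃ w ∈ t', ∃ α : ℝ, 0 < α ∧ realVec w = α • realVec v := by
  obtain ⟨g, hg, hvg⟩ := mem_coneOf.1 hvt'
  choose! f hf hfw using fun w (hw : w ∈ t') => mem_coneOf.1 (hsub (realVec_mem_coneOf hw))
  have hcomb : ∑ u ∈ {v}, (1 : ℝ) • realVec u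
      = ∑ u ∈ t, (∑ w ∈ t', g w * f w u) • realVec u := by
    rw [Finset.sum_singleton, one_smul]
    refine hvg.trans ?_
    simp_rw [Finset.sum_smul, mul_smul]
    rw [Finset.sum_comm]
    refine Finset.sum_congr rfl fun w hw => ?_
    rw [← Finset.smul_sum, ← hfw w hw]
  have hcoeff := fun {u} => ht.ite_eq_ite_of_sum_eq (Finset.singleton_subset_iff.2 hv)
    subset_rfl hcomb (i := u)
  have hv1 : ∑ w ∈ t', g w * f w v = 1 := by simpa [hv] using (hcoeff hv).symm
  obtain ⟨w₀, hw₀, hne⟩ := Finset.exists_ne_zero_of_sum_ne_zero (hv1.trans_ne one_ne_zero)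
  have hg₀ : 0 < g w₀ := (hg w₀).lt_of_ne fun h => hne (by rw [← h, zero_mul])
  have hf₀ : 0 < f w₀ v := (hf w₀ hw₀ v).lt_of_ne fun h => hne (by rw [← h, mul_zero])
  have hzero : ∀ u ∈ t, u ≠ v → f w₀ u = 0 := fun u hu huv => by
    have hsum0 : ∑ w ∈ t', g w * f w u = 0 := by simpa [hu, huv] using (hcoeff hu).symm
    have := (Finset.sum_eq_zero_iff_of_nonneg fun w hw => mul_nonneg (hg w) (hf w hw u)).1
      hsum0 w₀ hw₀
    exact (mul_eq_zero.1 this).resolve_left hg₀.ne'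
  refine ⟨w₀, hw₀, f w₀ v, hf₀, ?_⟩
  rw [hfw w₀ hw₀, Finset.sum_eq_single v (fun u hu huv => by rw [hzero u hu huv, zero_smul])
    (fun h => absurd hv h)]

theorem IsGenerable.isSimplicialFan {F : Finset (Finset (Fin d → ℤ))}
    (hns : ∀ σ ∈ F, IsNsCone d σ) (hgen : IsGenerable F) : IsSimplicialFan F where
  linearIndepOn σ hσ := (hns σ hσ).linearIndepOn
  inter_subset σ hσ τ hτ := by
    obtain ⟨⟨t, ht, heq⟩, ⟨t', ht', heq'⟩⟩ := hgen σ hσ τ hτ σ subset_rfl τ subset_rfl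
    have htτ : t ⊆ τ := fun v hv => by
      obtain ⟨w, hw, α, hα, hwv⟩ := exists_mem_eq_pos_smul_of_coneOf_subset
        ((hns σ hσ).linearIndepOn.mono ht) hv (heq'.symm.trans heq).subset
        (heq' ▸ heq ▸ realVec_mem_coneOf hv)
      rw [← (hns σ hσ).eq_of_realVec_eq_smul (hns τ hτ) (ht hv) (ht' hw) hα hwv]
      exact ht' hw
    rw [heq]
    exact coneOf_mono (Finset.subset_inter ht htτ)

end Nonsingular

section BadEdges

variable {d : ℕ} {B : Matrix (Fin d) (Fin 2) ℤ} {F : Finset (Finset (Fin d → ℤ))}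
  {σ : Finset (Fin d → ℤ)} {ε ε' : Fin d → ℤ}

lemma deltaB_add (a b : Fin d → ℤ) : deltaB B (a + b) = deltaB B a + deltaB B b := by
  simp only [deltaB, bEdge, Pi.add_apply, add_mul, Finset.sum_add_distrib]
  ring

lemma ne_zero_of_deltaB_ne_zero (h : deltaB B ε ≠ 0) : ε ≠ 0 := by
  rintro rfl
  simp [deltaB, bEdge] at h

lemma goodCone_iff : GoodCone B σ ↔ (∀ ε ∈ σ, 0 ≤ deltaB B ε) ∨ ∀ ε ∈ σ, deltaB B ε ≤ 0 := by
  have hperm : ∀ γ : Equiv.Perm (Fin 2), γ = 1 ∨ γ = Equiv.swap 0 1 := by decide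
  simp only [GoodCone, Fin.monotone_iff_le_succ, Fin.forall_fin_one, deltaB, sub_nonneg,
    sub_nonpos]
  constructor
  · rintro ⟨γ, hγ⟩
    rcases hperm γ with rfl | rfl
    · exact Or.inr fun ε hε => by simpa using hγ ε hε
    · exact Or.inl fun ε hε => by simpa using hγ ε hε
  · rintro (h | h)
    · exact ⟨Equiv.swap 0 1, fun ε hε => by simpa using h ε hε⟩
    · exact ⟨1, fun ε hε => by simpa using h ε hε⟩

lemma not_goodCone_iff :
    ¬GoodCone B σ ↔ (∃ a ∈ σ, 0 < deltaB B a) ∧ ∃ b ∈ σ, deltaB B b < 0 := by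
  simp only [goodCone_iff, not_or, not_forall, not_le, exists_prop]
  exact and_comm

@[simp]
lemma mem_edges {G : Finset (Finset (Fin d → ℤ))} : ε ∈ edges G ↔ ∃ σ ∈ G, ε ∈ σ := by
  simp [edges]

lemma mem_badCones : σ ∈ badCones B F ↔ σ ∈ F ∧ ¬GoodCone B σ := Finset.mem_filter

lemma mem_EB : ε ∈ EB B F ↔ ε ∈ edges (badCones B F) ∧ (deltaB B ε).natAbs = muB B F :=
  Finset.mem_filter

lemma mem_EBe : ε' ∈ EBe B F ε ↔ ε' ∈ edges (badCones B F) ∧ (∃ σ ∈ F, ε ∈ σ ∧ ε' ∈ σ) ∧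
    deltaB B ε * deltaB B ε' < 0 := by
  simp only [EBe, Finset.mem_filter, Finset.mem_inter, mem_edges (G := F.filter _), and_assoc]

lemma edges_badCones_subset : edges (badCones B F) ⊆ edges F :=
  Finset.biUnion_subset_biUnion_of_subset_left _ (Finset.filter_subset _ _)

lemma natAbs_deltaB_le_muB (h : ε ∈ edges (badCones B F)) : (deltaB B ε).natAbs ≤ muB B F :=
  Finset.le_sup (f := fun ε => (deltaB B ε).natAbs) h

end BadEdges

structure IsBGoodPair {d : ℕ} (B : Matrix (Fin d) (Fin 2) ℤ) (F : Finset (Finset (Fin d → ℤ)))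
    (ε₁ ε₂ : Fin d → ℤ) : Prop where
  fst_mem_EB : ε₁ ∈ EB B F
  snd_mem_EBe : ε₂ ∈ EBe B F ε₁
  natAbs_deltaB_snd : (deltaB B ε₂).natAbs = (EBe B F ε₁).sup fun ε => (deltaB B ε).natAbs

lemma exists_isBGoodPair {d : ℕ} {B : Matrix (Fin d) (Fin 2) ℤ}
    {F : Finset (Finset (Fin d → ℤ))} (h : ¬GoodFan B F) : ∃ ε₁ ε₂, IsBGoodPair B F ε₁ ε₂ := by
  obtain ⟨σ₀, hσ₀, hbad₀⟩ : ∃ σ ∈ F, ¬GoodCone B σ := by simpa [GoodFan] using h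
  obtain ⟨⟨p, hp, hδp⟩, -⟩ := not_goodCone_iff.1 hbad₀
  have hpbad : p ∈ edges (badCones B F) := mem_edges.2 ⟨σ₀, mem_badCones.2 ⟨hσ₀, hbad₀⟩, hp⟩
  obtain ⟨ε₁, hε₁, hsup₁⟩ := Finset.exists_mem_eq_sup _ ⟨p, hpbad⟩ fun ε => (deltaB B ε).natAbs
  have h₁ : ε₁ ∈ EB B F := mem_EB.2 ⟨hε₁, hsup₁.symm⟩
  have hδ₁ : deltaB B ε₁ ≠ 0 := by
    have := natAbs_deltaB_le_muB hpbad
    rw [← (mem_EB.1 h₁).2] at this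
    omega
  obtain ⟨σ₁, hσ₁, hε₁σ₁⟩ := mem_edges.1 hε₁
  obtain ⟨hσ₁F, hbad₁⟩ := mem_badCones.1 hσ₁
  obtain ⟨⟨p₁, hp₁, hδp₁⟩, ⟨n₁, hn₁, hδn₁⟩⟩ := not_goodCone_iff.1 hbad₁
  have hne : (EBe B F ε₁).Nonempty := by
    rcases hδ₁.lt_or_gt with hneg | hpos
    · exact ⟨p₁, mem_EBe.2 ⟨mem_edges.2 ⟨σ₁, hσ₁, hp₁⟩, ⟨σ₁, hσ₁F, hε₁σ₁, hp₁⟩,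
        mul_neg_of_neg_of_pos hneg hδp₁⟩⟩
    · exact ⟨n₁, mem_EBe.2 ⟨mem_edges.2 ⟨σ₁, hσ₁, hn₁⟩, ⟨σ₁, hσ₁F, hε₁σ₁, hn₁⟩,
        mul_neg_of_pos_of_neg hpos hδn₁⟩⟩
  obtain ⟨ε₂, hε₂, hsup₂⟩ := Finset.exists_mem_eq_sup _ hne fun ε => (deltaB B ε).natAbs
  exact ⟨ε₁, ε₂, h₁, hε₂, hsup₂.symm⟩

namespace IsBGoodPair

variable {d : ℕ} {B : Matrix (Fin d) (Fin 2) ℤ} {F : Finset (Finset (Fin d → ℤ))}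
  {ε ε₁ ε₂ : Fin d → ℤ} (hp : IsBGoodPair B F ε₁ ε₂)
include hp

lemma deltaB_mul_neg : deltaB B ε₁ * deltaB B ε₂ < 0 := (mem_EBe.1 hp.snd_mem_EBe).2.2

lemma natAbs_deltaB_fst : (deltaB B ε₁).natAbs = muB B F := (mem_EB.1 hp.fst_mem_EB).2

lemma natAbs_deltaB_snd_le : (deltaB B ε₂).natAbs ≤ muB B F :=
  natAbs_deltaB_le_muB (mem_EBe.1 hp.snd_mem_EBe).1

lemma ne : ε₁ ≠ ε₂ := by
  rintro rfl
  nlinarith [hp.deltaB_mul_neg]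

lemma exists_mem_mem : ∃ σ ∈ F, ε₁ ∈ σ ∧ ε₂ ∈ σ := (mem_EBe.1 hp.snd_mem_EBe).2.1

lemma mem_badCones_of_mem {σ : Finset (Fin d → ℤ)} (hσ : σ ∈ F) (h₁ : ε₁ ∈ σ) (h₂ : ε₂ ∈ σ) :
    σ ∈ badCones B F := by
  refine mem_badCones.2 ⟨hσ, not_goodCone_iff.2 ?_⟩
  rcases mul_neg_iff.1 hp.deltaB_mul_neg with ⟨hpos, hneg⟩ | ⟨hneg, hpos⟩
  · exact ⟨⟨ε₁, h₁, hpos⟩, ⟨ε₂, h₂, hneg⟩⟩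
  · exact ⟨⟨ε₂, h₂, hpos⟩, ⟨ε₁, h₁, hneg⟩⟩

lemma isBGoodBlowUp : IsBGoodBlowUp B F (blowUp F ε₁ ε₂) :=
  ⟨ε₁, ε₂, hp.ne, edges_badCones_subset (mem_EB.1 hp.fst_mem_EB).1,
    edges_badCones_subset (mem_EBe.1 hp.snd_mem_EBe).1, hp.exists_mem_mem, hp.fst_mem_EB,
    hp.snd_mem_EBe, hp.natAbs_deltaB_snd, rfl⟩

lemma natAbs_deltaB_add_lt : (deltaB B (ε₁ + ε₂)).natAbs < muB B F := by
  have h₁ := hp.natAbs_deltaB_fst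
  have h₂ := hp.natAbs_deltaB_snd_le
  rw [deltaB_add]
  rcases mul_neg_iff.1 hp.deltaB_mul_neg with ⟨_, _⟩ | ⟨_, _⟩ <;> omega

lemma mem_or_mem_edges_badCones_of_blowUp
    (hε : ε ∈ edges (badCones B (blowUp F ε₁ ε₂))) :
    ε = ε₁ + ε₂ ∨ ε ∈ edges (badCones B F) := by
  obtain ⟨τ, hτ, hετ⟩ := mem_edges.1 hε
  obtain ⟨hτF', hbad⟩ := mem_badCones.1 hτ
  rcases mem_or_subset_insert_of_mem_blowUp hτF' with ⟨hτF, -⟩ | ⟨σ, hσ, h₁, h₂, hτσ⟩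
  · exact Or.inr (mem_edges.2 ⟨τ, mem_badCones.2 ⟨hτF, hbad⟩, hετ⟩)
  · exact (Finset.mem_insert.1 (hτσ hετ)).imp_right fun hεσ =>
      mem_edges.2 ⟨σ, hp.mem_badCones_of_mem hσ h₁ h₂, hεσ⟩

lemma muB_blowUp_le : muB B (blowUp F ε₁ ε₂) ≤ muB B F :=
  Finset.sup_le fun _ hε => by
    rcases hp.mem_or_mem_edges_badCones_of_blowUp hε with rfl | hεF
    · exact hp.natAbs_deltaB_add_lt.le
    · exact natAbs_deltaB_le_muB hεF

lemma snd_notMem_EBe_blowUp : ε₂ ∉ EBe B (blowUp F ε₁ ε₂) ε₁ := by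
  have hδ := hp.deltaB_mul_neg.ne
  intro h
  obtain ⟨-, ⟨τ, hτ, h₁, h₂⟩, -⟩ := mem_EBe.1 h
  exact not_mem_and_mem_of_mem_blowUp (ne_zero_of_deltaB_ne_zero (left_ne_zero_of_mul hδ))
    (ne_zero_of_deltaB_ne_zero (right_ne_zero_of_mul hδ)) hτ ⟨h₁, h₂⟩

section SameMu

variable (hmu : muB B (blowUp F ε₁ ε₂) = muB B F)
include hmu

lemma ne_add_of_mem_EB_blowUp (hε : ε ∈ EB B (blowUp F ε₁ ε₂)) : ε ≠ ε₁ + ε₂ := by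
  rintro rfl
  exact (hmu ▸ (mem_EB.1 hε).2 ▸ hp.natAbs_deltaB_add_lt).false

lemma EB_blowUp_subset : EB B (blowUp F ε₁ ε₂) ⊆ EB B F := fun _ hε =>
  mem_EB.2 ⟨(hp.mem_or_mem_edges_badCones_of_blowUp (mem_EB.1 hε).1).resolve_left
    (hp.ne_add_of_mem_EB_blowUp hmu hε), hmu ▸ (mem_EB.1 hε).2⟩

/-- The exceptional edge never enters `E_B(Σ̃, ε)`: otherwise `ε` would lie in `E_B(Σ, ε₁)`,
and the maximality of `|b_{ε₂1} - b_{ε₂2}|` would force `ε₁ + ε₂` to have `b₁ = b₂`. -/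
lemma add_notMem_EBe_blowUp (hF : IsSimplicialFan F) (hε : ε ∈ EB B (blowUp F ε₁ ε₂)) :
    ε₁ + ε₂ ∉ EBe B (blowUp F ε₁ ε₂) ε := by
  intro he
  obtain ⟨-, ⟨τ, hτ, hετ, heτ⟩, hsign⟩ := mem_EBe.1 he
  obtain ⟨σ₀, hσ₀, h₁₀, h₂₀⟩ := hp.exists_mem_mem
  obtain ⟨σ, hσ, h₁, -, hτσ⟩ := exists_subset_insert_of_add_mem_blowUp hF hσ₀ h₁₀ h₂₀ hp.ne hτ heτ
  have hεF := hp.EB_blowUp_subset hmu hε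
  have hεσ : ε ∈ σ := Finset.mem_of_mem_insert_of_ne (hτσ hετ) (hp.ne_add_of_mem_EB_blowUp hmu hε)
  have hδ₁ := hp.natAbs_deltaB_fst
  have hδ₂ := hp.natAbs_deltaB_snd_le
  have hδε := (mem_EB.1 hεF).2
  rw [deltaB_add] at hsign
  have hsign₁ : deltaB B ε₁ * deltaB B ε < 0 := by
    rcases mul_neg_iff.1 hp.deltaB_mul_neg with h | h <;>
      rcases mul_neg_iff.1 hsign with h' | h' <;> exact mul_neg_iff.2 (by omega)
  have hεEBe : ε ∈ EBe B F ε₁ := mem_EBe.2 ⟨(mem_EB.1 hεF).1, ⟨σ, hσ, h₁, hεσ⟩, hsign₁⟩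
  have hle : (deltaB B ε).natAbs ≤ (deltaB B ε₂).natAbs :=
    hp.natAbs_deltaB_snd ▸ Finset.le_sup (f := fun ε => (deltaB B ε).natAbs) hεEBe
  rcases mul_neg_iff.1 hp.deltaB_mul_neg with h | h <;>
    rcases mul_neg_iff.1 hsign with h' | h' <;> omega

lemma EBe_blowUp_subset (hF : IsSimplicialFan F) (hε : ε ∈ EB B (blowUp F ε₁ ε₂)) :
    EBe B (blowUp F ε₁ ε₂) ε ⊆ EBe B F ε := by
  intro ε' hε'
  have hε'e : ε' ≠ ε₁ + ε₂ := fun h => hp.add_notMem_EBe_blowUp hmu hF hε (h ▸ hε')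
  have hεe := hp.ne_add_of_mem_EB_blowUp hmu hε
  obtain ⟨hbad, ⟨τ, hτ, hετ, hε'τ⟩, hsign⟩ := mem_EBe.1 hε'
  refine mem_EBe.2 ⟨(hp.mem_or_mem_edges_badCones_of_blowUp hbad).resolve_left hε'e, ?_, hsign⟩
  rcases mem_or_subset_insert_of_mem_blowUp hτ with ⟨hτF, -⟩ | ⟨σ, hσ, -, -, hτσ⟩
  · exact ⟨τ, hτF, hετ, hε'τ⟩
  · exact ⟨σ, hσ, Finset.mem_of_mem_insert_of_ne (hτσ hετ) hεe,
      Finset.mem_of_mem_insert_of_ne (hτσ hε'τ) hε'e⟩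

lemma nuB_blowUp_lt (hF : IsSimplicialFan F) : nuB B (blowUp F ε₁ ε₂) < nuB B F := by
  have hEB := hp.EB_blowUp_subset hmu
  have hEBe := fun {ε} (hε : ε ∈ EB B (blowUp F ε₁ ε₂)) => hp.EBe_blowUp_subset hmu hF hε
  by_cases h₁ : ε₁ ∈ EB B (blowUp F ε₁ ε₂)
  · calc nuB B (blowUp F ε₁ ε₂)
        < ∑ ε ∈ EB B (blowUp F ε₁ ε₂), (EBe B F ε).card :=
          Finset.sum_lt_sum (fun ε hε => Finset.card_le_card (hEBe hε))
            ⟨ε₁, h₁, Finset.card_lt_card ((Finset.ssubset_iff_of_subset (hEBe h₁)).2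
              ⟨ε₂, hp.snd_mem_EBe, hp.snd_notMem_EBe_blowUp⟩)⟩
      _ ≤ nuB B F := Finset.sum_le_sum_of_subset hEB
  · calc nuB B (blowUp F ε₁ ε₂)
        ≤ ∑ ε ∈ EB B (blowUp F ε₁ ε₂), (EBe B F ε).card :=
          Finset.sum_le_sum fun ε hε => Finset.card_le_card (hEBe hε)
      _ < nuB B F := Finset.sum_lt_sum_of_subset hEB hp.fst_mem_EB h₁
          (Finset.card_pos.2 ⟨ε₂, hp.snd_mem_EBe⟩) fun _ _ _ => Nat.zero_le _

end SameMu

lemma lex_lt_blowUp (hF : IsSimplicialFan F) :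
    Prod.Lex (· < ·) (· < ·) (muB B (blowUp F ε₁ ε₂), nuB B (blowUp F ε₁ ε₂))
      (muB B F, nuB B F) := by
  rcases hp.muB_blowUp_le.lt_or_eq with hlt | heq
  · exact .left _ _ hlt
  · rw [heq]
    exact .right _ (hp.nuB_blowUp_lt heq hF)

end IsBGoodPair

theorem IsSimplicialFan.exists_reflTransGen_isBGoodBlowUp {d : ℕ}
    {F : Finset (Finset (Fin d → ℤ))} (hF : IsSimplicialFan F) (B : Matrix (Fin d) (Fin 2) ℤ) :
    ∃ F', Relation.ReflTransGen (IsBGoodBlowUp B) F F' ∧ GoodFan B F' := by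
  by_cases hgood : GoodFan B F
  · exact ⟨F, .refl, hgood⟩
  obtain ⟨ε₁, ε₂, hp⟩ := exists_isBGoodPair hgood
  obtain ⟨F', hseq, hgood'⟩ := (hF.blowUp hp.ne).exists_reflTransGen_isBGoodBlowUp B
  exact ⟨F', .head hp.isBGoodBlowUp hseq, hgood'⟩
termination_by (muB B F, nuB B F)
decreasing_by exact hp.lex_lt_blowUp hF

theorem stmt5_general (d : ℕ) (F : Finset (Finset (Fin d → ℤ)))
    (hns : ∀ σ ∈ F, IsNsCone d σ) (hgen : IsGenerable F)
    (B : Matrix (Fin d) (Fin 2) ℤ) :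
    ∃ F' : Finset (Finset (Fin d → ℤ)),
      Relation.ReflTransGen (IsBGoodBlowUp B) F F' ∧ GoodFan B F' :=
  (IsGenerable.isSimplicialFan hns hgen).exists_reflTransGen_isBGoodBlowUp B

/-- if `B` is not `Σ`-good, there is a series of `B`-good blow-ups
`Σ̃ ⇝ Σ` such that `B` is `Σ̃`-good. -/
theorem stmt5 (d : ℕ) (F : Finset (Finset (Fin d → ℤ)))
    (hns : ∀ σ ∈ F, IsNsCone d σ) (hgen : IsGenerable F)
    (B : Matrix (Fin d) (Fin 2) ℤ) (hbad : ¬ GoodFan B F) :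
    ∃ F' : Finset (Finset (Fin d → ℤ)),
      Relation.ReflTransGen (IsBGoodBlowUp B) F F' ∧ GoodFan B F' :=
  stmt5_general d F hns hgen B
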